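/- Let N ≥ 2 be an integer and let R be the (N−1)×(N−1) matrix with entries R_{kj} = r_{|k−j|}. Then R_{kk} > 0 for all k, R_{kj} < 0 for all k ≠ j, and R is strictly diagonally dominant: R_{kk} > Σ_{j≠k} |R_{kj}| for every 1 ≤ k ≤ N−1. -/

import Mathlib

/-!
With `f x = x² log |x|` one has `r_p = (2π)⁻¹ Δ⁴f (p - 2)`, `Δ` the unit forward difference.
For `p ≥ 2`, `Δ⁴f (p - 2)` is a second difference of `Δ²f`, which is strictly concave on `[0, ∞)`
since `(Δ²f)'' x = 2 log (x (x + 2) / (x + 1)²) < 0`; for `p = 1` it is `9 log 3 - 16 log 2 < 0`.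
Hence `|r_p| = -r_p` off the diagonal, and the one-sided sums `∑_{p ≤ m} |r_p|` telescope to
`(2π)⁻¹ (Δ³f (-1) - Δ³f (m - 1))`. Here `Δ³f (-1) = 4 log 2` and `Δ³f (m - 1) > 0`, being a second
difference of the strictly convex `Δf` for `m ≥ 1`, so each one-sided sum is below
`(2π)⁻¹ 4 log 2 = r_0 / 2`, and a row of `R` has one such sum on each side of the diagonal.
-/

/-- `r_p`, with the convention `m² ln|m| = 0` when `m = 0` (automatic since `Real.log 0 = 0`). -/
noncomputable def rFn (p : ℕ) : ℝ :=
  (1 / (2 * Real.pi)) *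
    (((p : ℝ) - 2) ^ 2 * Real.log |(p : ℝ) - 2| - 4 * ((p : ℝ) - 1) ^ 2 * Real.log |(p : ℝ) - 1|
      + 6 * (p : ℝ) ^ 2 * Real.log (p : ℝ) - 4 * ((p : ℝ) + 1) ^ 2 * Real.log ((p : ℝ) + 1)
      + ((p : ℝ) + 2) ^ 2 * Real.log ((p : ℝ) + 2))

open Real Finset fwdDiff

section FwdDiff

variable {𝕜 F : Type*} [NontriviallyNormedField 𝕜] [NormedAddCommGroup F] [NormedSpace 𝕜 F]

theorem HasDerivAt.fwdDiff {f f' : 𝕜 → F} {x h : 𝕜} (hx : HasDerivAt f (f' x) x)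
    (hxh : HasDerivAt f (f' (x + h)) (x + h)) : HasDerivAt (Δ_[h] f) (Δ_[h] f' x) x :=
  (hxh.comp_add_const x h).sub hx

theorem Continuous.fwdDiff {M G : Type*} [AddCommMonoid M] [TopologicalSpace M] [ContinuousAdd M]
    [AddCommGroup G] [TopologicalSpace G] [IsTopologicalAddGroup G] {f : M → G}
    (hf : Continuous f) (h : M) : Continuous (Δ_[h] f) :=
  (hf.comp (continuous_add_const h)).sub hf

end FwdDiff

theorem strictConvexOn_of_hasDerivAt2_pos {D : Set ℝ} (hD : Convex ℝ D) {f f' f'' : ℝ → ℝ}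
    (hf : ContinuousOn f D) (hf' : ∀ x ∈ interior D, HasDerivAt f (f' x) x)
    (hf'' : ∀ x ∈ interior D, HasDerivAt f' (f'' x) x) (hpos : ∀ x ∈ interior D, 0 < f'' x) :
    StrictConvexOn ℝ D f := by
  have hmono : StrictMonoOn f' (interior D) :=
    strictMonoOn_of_deriv_pos hD.interior
      (fun x hx => (hf'' x hx).continuousAt.continuousWithinAt) fun x hx => by
        rw [interior_interior] at hx
        rw [(hf'' x hx).deriv]
        exact hpos x hx
  exact (hmono.congr fun x hx => ((hf' x hx).deriv).symm).strictConvexOn_of_deriv hD hf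

theorem strictConcaveOn_of_hasDerivAt2_neg {D : Set ℝ} (hD : Convex ℝ D) {f f' f'' : ℝ → ℝ}
    (hf : ContinuousOn f D) (hf' : ∀ x ∈ interior D, HasDerivAt f (f' x) x)
    (hf'' : ∀ x ∈ interior D, HasDerivAt f' (f'' x) x) (hneg : ∀ x ∈ interior D, f'' x < 0) :
    StrictConcaveOn ℝ D f := by
  have := strictConvexOn_of_hasDerivAt2_pos hD hf.neg (fun x hx => (hf' x hx).neg)
    (fun x hx => (hf'' x hx).neg) fun x hx => neg_pos.2 (hneg x hx)
  simpa using this.neg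

theorem StrictConvexOn.fwdDiff_iter_two_pos {D : Set ℝ} {f : ℝ → ℝ} (hf : StrictConvexOn ℝ D f)
    {x h : ℝ} (hx : x ∈ D) (hxh : x + 2 * h ∈ D) (hh : h ≠ 0) : 0 < (Δ_[h])^[2] f x := by
  have := hf.2 hx hxh (by simpa using hh) one_half_pos one_half_pos (by norm_num)
  have hmid : (1 / 2 : ℝ) • x + (1 / 2 : ℝ) • (x + 2 * h) = x + h := by
    simp only [smul_eq_mul]; ring
  rw [hmid, smul_eq_mul, smul_eq_mul] at this
  simp only [Function.iterate_succ_apply', Function.iterate_zero_apply, fwdDiff]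
  ring_nf at this ⊢
  linarith

theorem StrictConcaveOn.fwdDiff_iter_two_neg {D : Set ℝ} {f : ℝ → ℝ} (hf : StrictConcaveOn ℝ D f)
    {x h : ℝ} (hx : x ∈ D) (hxh : x + 2 * h ∈ D) (hh : h ≠ 0) : (Δ_[h])^[2] f x < 0 := by
  have := hf.neg.fwdDiff_iter_two_pos hx hxh hh
  simp only [Function.iterate_succ_apply', Function.iterate_zero_apply, fwdDiff,
    Pi.neg_apply] at this ⊢
  linarith

/-- `Real.log` is even, so this is `x² log |x|` on all of `ℝ`. -/
noncomputable def sqMulLog (x : ℝ) : ℝ := x ^ 2 * log x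

theorem continuous_sqMulLog : Continuous sqMulLog :=
  (continuous_id.mul continuous_mul_log).congr fun x => by
    simp only [sqMulLog, Pi.mul_apply, id]; ring

theorem hasDerivAt_sqMulLog {x : ℝ} (hx : x ≠ 0) :
    HasDerivAt sqMulLog (2 * x * log x + x) x :=
  ((hasDerivAt_pow 2 x).mul (hasDerivAt_log hx)).congr_deriv (by field_simp; ring)

theorem hasDerivAt_two_mul_mul_log_add {x : ℝ} (hx : x ≠ 0) :
    HasDerivAt (fun y => 2 * y * log y + y) (2 * log x + 3) x :=
  ((((hasDerivAt_id' x).const_mul 2).mul (hasDerivAt_log hx)).add (hasDerivAt_id' x)).congr_deriv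
    (by field_simp; ring)

theorem strictConvexOn_fwdDiff_sqMulLog : StrictConvexOn ℝ (Set.Ici 0) (Δ_[1] sqMulLog) := by
  refine strictConvexOn_of_hasDerivAt2_pos (convex_Ici 0)
    (continuous_sqMulLog.fwdDiff 1).continuousOn
    (f' := Δ_[1] fun y => 2 * y * log y + y) (f'' := Δ_[1] fun y => 2 * log y + 3) ?_ ?_ ?_ <;>
    simp only [interior_Ici, Set.mem_Ioi]
  · intro x hx
    apply HasDerivAt.fwdDiff <;> exact hasDerivAt_sqMulLog (by positivity)
  · intro x hx
    apply HasDerivAt.fwdDiff <;> exact hasDerivAt_two_mul_mul_log_add (by positivity)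
  · intro x hx
    have := log_lt_log hx (lt_add_one x)
    simp only [fwdDiff]
    linarith

theorem strictConcaveOn_fwdDiff_iter_two_sqMulLog :
    StrictConcaveOn ℝ (Set.Ici 0) ((Δ_[1])^[2] sqMulLog) := by
  refine strictConcaveOn_of_hasDerivAt2_neg (convex_Ici 0)
    (((continuous_sqMulLog.fwdDiff 1).fwdDiff 1).continuousOn)
    (f' := (Δ_[1])^[2] fun y => 2 * y * log y + y) (f'' := (Δ_[1])^[2] fun y => 2 * log y + 3)
    ?_ ?_ ?_ <;> simp only [interior_Ici, Set.mem_Ioi, Function.iterate_succ_apply',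
      Function.iterate_zero_apply]
  · intro x hx
    apply HasDerivAt.fwdDiff <;> apply HasDerivAt.fwdDiff <;>
      exact hasDerivAt_sqMulLog (by positivity)
  · intro x hx
    apply HasDerivAt.fwdDiff <;> apply HasDerivAt.fwdDiff <;>
      exact hasDerivAt_two_mul_mul_log_add (by positivity)
  · intro x hx
    have : log (x * (x + 1 + 1)) < log ((x + 1) * (x + 1)) :=
      log_lt_log (by positivity) (by nlinarith)
    rw [log_mul (by positivity) (by positivity), log_mul (by positivity) (by positivity)] at this
    simp only [fwdDiff]
    linarith

theorem rFn_eq_fwdDiff_iter (p : ℕ) :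
    rFn p = 1 / (2 * π) * (Δ_[1])^[4] sqMulLog (p - 2) := by
  simp only [rFn, sqMulLog, log_abs, Function.iterate_succ_apply', Function.iterate_zero_apply,
    fwdDiff]
  ring_nf

theorem fwdDiff_iter_three_sqMulLog_neg_one : (Δ_[1])^[3] sqMulLog (-1) = 4 * log 2 := by
  simp only [sqMulLog, Function.iterate_succ_apply', Function.iterate_zero_apply, fwdDiff]
  norm_num

theorem rFn_zero : rFn 0 = 1 / (2 * π) * (8 * log 2) := by
  simp only [rFn]
  norm_num
  ring

theorem rFn_zero_pos : 0 < rFn 0 := by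
  rw [rFn_zero]
  have := log_pos one_lt_two
  positivity

theorem rFn_one : rFn 1 = 1 / (2 * π) * (9 * log 3 - 16 * log 2) := by
  simp only [rFn]
  norm_num
  ring

theorem fwdDiff_iter_three_sqMulLog_pos (m : ℕ) : 0 < (Δ_[1])^[3] sqMulLog (m - 1) := by
  cases m with
  | zero =>
    rw [Nat.cast_zero, zero_sub, fwdDiff_iter_three_sqMulLog_neg_one]
    exact mul_pos four_pos (log_pos one_lt_two)
  | succ m =>
    have := strictConvexOn_fwdDiff_sqMulLog.fwdDiff_iter_two_pos (x := m) (h := 1)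
      (Set.mem_Ici.2 (Nat.cast_nonneg m)) (by simp only [Set.mem_Ici]; positivity) one_ne_zero
    simpa only [← Function.iterate_succ_apply, Nat.cast_succ, add_sub_cancel_right] using this

theorem rFn_neg {p : ℕ} (hp : 1 ≤ p) : rFn p < 0 := by
  have hc : 0 < 1 / (2 * π) := by positivity
  obtain rfl | hp := hp.eq_or_lt
  · have hlog : 9 * log 3 < 16 * log 2 := by
      have := log_lt_log (by positivity) (show (3 : ℝ) ^ 9 < 2 ^ 16 by norm_num)
      rwa [log_pow, log_pow, Nat.cast_ofNat, Nat.cast_ofNat] at this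
    rw [rFn_one]
    exact mul_neg_of_pos_of_neg hc (by linarith)
  · have h2 : (2 : ℝ) ≤ p := by exact_mod_cast hp
    have := strictConcaveOn_fwdDiff_iter_two_sqMulLog.fwdDiff_iter_two_neg (x := p - 2) (h := 1)
      (Set.mem_Ici.2 (by linarith)) (Set.mem_Ici.2 (by linarith)) one_ne_zero
    rw [rFn_eq_fwdDiff_iter]
    exact mul_neg_of_pos_of_neg hc (by rwa [← Function.iterate_add_apply] at this)

theorem sum_range_rFn_succ (m : ℕ) :
    ∑ i ∈ range m, rFn (i + 1) = 1 / (2 * π) * ((Δ_[1])^[3] sqMulLog (m - 1) - 4 * log 2) := by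
  set G := (Δ_[1])^[3] sqMulLog
  have hstep (i : ℕ) : rFn (i + 1) = 1 / (2 * π) * (G ((i + 1 : ℕ) - 1) - G (i - 1)) := by
    rw [rFn_eq_fwdDiff_iter, Function.iterate_succ_apply']
    simp only [fwdDiff, G]
    push_cast
    ring_nf
  simp only [hstep, ← mul_sum]
  rw [sum_range_sub (fun i : ℕ => G (i - 1)), Nat.cast_zero, zero_sub,
    show G (-1) = 4 * log 2 from fwdDiff_iter_three_sqMulLog_neg_one]

theorem two_mul_sum_range_abs_rFn_succ_lt (m : ℕ) : 2 * ∑ i ∈ range m, |rFn (i + 1)| < rFn 0 := by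
  have habs : ∑ i ∈ range m, |rFn (i + 1)| = -∑ i ∈ range m, rFn (i + 1) := by
    rw [← sum_neg_distrib]
    exact sum_congr rfl fun i _ => abs_of_neg (rFn_neg (Nat.le_add_left 1 i))
  have hc : 0 < 1 / (2 * π) := by positivity
  have := mul_pos hc (fwdDiff_iter_three_sqMulLog_pos m)
  rw [habs, sum_range_rFn_succ, rFn_zero]
  linarith

theorem sum_filter_ne_natAbs_sub {M : Type*} [AddCommGroup M] {n : ℕ} (g : ℕ → M) (k : Fin n) :
    ∑ j ∈ univ.filter (fun j => j ≠ k), g (((k : ℕ) : ℤ) - ((j : ℕ) : ℤ)).natAbs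
      = ∑ i ∈ range k, g (i + 1) + ∑ i ∈ range (n - 1 - k), g (i + 1) := by
  set F : ℕ → M := fun j => g (((k : ℕ) : ℤ) - (j : ℤ)).natAbs
  have hsplit : ∑ j ∈ range n, F j = ∑ j ∈ range (k + 1 + (n - 1 - k)), F j := by
    rw [show (k : ℕ) + 1 + (n - 1 - k) = n by omega]
  have hbelow : ∑ j ∈ range k, F j = ∑ i ∈ range k, g (i + 1) := by
    rw [← sum_range_reflect]
    refine sum_congr rfl fun j hj => congrArg g ?_
    have := mem_range.1 hj
    omega
  have habove (i : ℕ) : F (k + 1 + i) = g (i + 1) := congrArg g (by omega)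
  rw [filter_ne', sum_erase_eq_sub (mem_univ k), Fin.sum_univ_eq_sum_range F, hsplit,
    sum_range_add, sum_range_succ, hbelow]
  simp only [habove, F, sub_self, Int.natAbs_zero]
  abel

theorem stmt13_general (N : ℕ)
    (R : Matrix (Fin (N - 1)) (Fin (N - 1)) ℝ)
    (hR : ∀ k j, R k j = rFn (((k : ℕ) : ℤ) - ((j : ℕ) : ℤ)).natAbs) :
    (∀ k, 0 < R k k) ∧
    (∀ k j, k ≠ j → R k j < 0) ∧
    (∀ k, ∑ j ∈ Finset.univ.filter (fun j => j ≠ k), |R k j| < R k k) := by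
  have hdiag (k : Fin (N - 1)) : R k k = rFn 0 := by simp [hR]
  refine ⟨fun k => hdiag k ▸ rFn_zero_pos, fun k j hkj => ?_, fun k => ?_⟩
  · rw [hR]
    exact rFn_neg (by have := Fin.val_ne_of_ne hkj; omega)
  · rw [hdiag]
    simp only [hR, sum_filter_ne_natAbs_sub (fun p => |rFn p|)]
    linarith [two_mul_sum_range_abs_rFn_succ_lt k,
      two_mul_sum_range_abs_rFn_succ_lt (N - 1 - 1 - k)]

theorem stmt13 (N : ℕ) (hN : 2 ≤ N)
    (R : Matrix (Fin (N - 1)) (Fin (N - 1)) ℝ)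
    (hR : ∀ k j, R k j = rFn (((k : ℕ) : ℤ) - ((j : ℕ) : ℤ)).natAbs) :
    (∀ k, 0 < R k k) ∧
    (∀ k j, k ≠ j → R k j < 0) ∧
    (∀ k, ∑ j ∈ Finset.univ.filter (fun j => j ≠ k), |R k j| < R k k) :=
  stmt13_general N R hR
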